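/- Let k be a field of characteristic different from 2, and in the polynomial ring k[x_0,x_1,x_2,x_3,x_4] consider the 2 × 6 matrix B₂ with rows (x_0², x_1², 0, x_2², x_3², 0) and (0, x_0², x_1² + x_1x_4, 0, x_2², x_3x_4), and the 6 × 2 matrix A₂ with rows (−x_2², −x_3²), (0, −x_2²), (−x_3x_4, 0), (x_0², x_1²), (0, x_0²), (x_1² + x_1x_4, 0). Then: (1) B₂·A₂ = 0; (2) for nonzero v = (v_0,…,v_4) ∈ k^5, the evaluated matrices A₂(v) and B₂(v) both have rank 2 unless v is a scalar multiple of (0,0,0,1,0), (0,0,0,0,1), or (0,1,0,0,−1), and at those three points both matrices have rank strictly less than 2; and (3) none of these three points satisfies x_0²+x_1²+x_2²+x_3²+x_4² = 0, so A₂ and B₂ have maximal rank at every point of the quadric threefold Q_3 ⊂ ℙ⁴. -/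
import Mathlib

set_option maxHeartbeats 1000000


open MvPolynomial

/-- The matrix `B₂` of the third explicit example on the quadric threefold `Q₃ ⊂ ℙ⁴`. -/
noncomputable def exB2 (k : Type*) [Field k] : Matrix (Fin 2) (Fin 6) (MvPolynomial (Fin 5) k) :=
  !![X 0 ^ 2, X 1 ^ 2, 0, X 2 ^ 2, X 3 ^ 2, 0;
     0, X 0 ^ 2, X 1 ^ 2 + X 1 * X 4, 0, X 2 ^ 2, X 3 * X 4]

/-- The matrix `A₂` of the third explicit example on the quadric threefold `Q₃ ⊂ ℙ⁴`. -/
noncomputable def exA2 (k : Type*) [Field k] : Matrix (Fin 6) (Fin 2) (MvPolynomial (Fin 5) k) :=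
  !![-X 2 ^ 2, -X 3 ^ 2;
     0, -X 2 ^ 2;
     -(X 3 * X 4), 0;
     X 0 ^ 2, X 1 ^ 2;
     0, X 0 ^ 2;
     X 1 ^ 2 + X 1 * X 4, 0]

lemma cv5 {α : Type*} (x : α) (u : Fin 5 → α) : Matrix.vecCons x u 5 = u 4 := rfl
lemma cv4 {α : Type*} (x : α) (u : Fin 4 → α) : Matrix.vecCons x u 4 = u 3 := rfl
lemma cv3 {α : Type*} (x : α) (u : Fin 3 → α) : Matrix.vecCons x u 3 = u 2 := rfl
lemma cv2 {α : Type*} (x : α) (u : Fin 2 → α) : Matrix.vecCons x u 2 = u 1 := rfl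

lemma aux_rank_le_one_factor {k : Type*} [Field k] {m n : Type*} [Fintype m] [Fintype n]
    (M : Matrix m n k) (N : Matrix m (Fin 1) k) (P : Matrix (Fin 1) n k)
    (h : M = N * P) : M.rank ≤ 1 := by
  have h1 := Matrix.rank_mul_le_left N P
  have h2 := Matrix.rank_le_card_width N
  simp only [Fintype.card_fin] at h2
  rw [h]
  exact le_trans h1 h2

lemma aux_rank_eq_two_of_minor {k : Type*} [Field k]
    (M : Matrix (Fin 6) (Fin 2) k) (f : Fin 2 → Fin 6)
    (h : (M.submatrix f id).det ≠ 0) : M.rank = 2 := by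
  refine le_antisymm (by simpa using M.rank_le_card_width) ?_
  have hinj : Function.Injective M.mulVecLin := by
    intro x y hxy
    have : (M.submatrix f id).mulVec x = (M.submatrix f id).mulVec y := by
      ext j
      simp only [Matrix.mulVec, Matrix.submatrix_apply, id]
      exact congrFun hxy (f j)
    exact Matrix.mulVec_injective_iff_isUnit.2
      ((Matrix.isUnit_iff_isUnit_det _).2 (isUnit_iff_ne_zero.2 h)) this
  have := LinearMap.finrank_range_of_inj hinj
  rw [Matrix.rank, this]
  simp

/-- over a field of characteristic ≠ 2, the explicit pair `(A₂,B₂)`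
satisfies `B₂·A₂ = 0`; for nonzero `v ∈ k⁵`, both evaluated matrices have rank `2` unless
`v` is a scalar multiple of `(0,0,0,1,0)`, `(0,0,0,0,1)` or `(0,1,0,0,−1)`, and at those
three points both have rank `< 2`; and none of those three points lies on the quadric
`x₀²+x₁²+x₂²+x₃²+x₄² = 0`, so `A₂` and `B₂` have maximal rank at every point of the
quadric threefold `Q₃ ⊂ ℙ⁴`. -/
theorem quadric_example_three (k : Type*) [Field k] (hchar : (2 : k) ≠ 0) :
    exB2 k * exA2 k = 0 ∧
    (∀ v : Fin 5 → k, v ≠ 0 →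
      (¬(∃ t : k, v = t • ![(0 : k), 0, 0, 1, 0] ∨ v = t • ![(0 : k), 0, 0, 0, 1] ∨
            v = t • ![(0 : k), 1, 0, 0, -1]) →
        ((exA2 k).map (MvPolynomial.eval v)).rank = 2 ∧
        ((exB2 k).map (MvPolynomial.eval v)).rank = 2) ∧
      ((∃ t : k, v = t • ![(0 : k), 0, 0, 1, 0] ∨ v = t • ![(0 : k), 0, 0, 0, 1] ∨
            v = t • ![(0 : k), 1, 0, 0, -1]) →
        ((exA2 k).map (MvPolynomial.eval v)).rank < 2 ∧
        ((exB2 k).map (MvPolynomial.eval v)).rank < 2)) ∧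
    ((0 : k) ^ 2 + 0 ^ 2 + 0 ^ 2 + 1 ^ 2 + 0 ^ 2 ≠ 0 ∧
      (0 : k) ^ 2 + 0 ^ 2 + 0 ^ 2 + 0 ^ 2 + 1 ^ 2 ≠ 0 ∧
      (0 : k) ^ 2 + 1 ^ 2 + 0 ^ 2 + 0 ^ 2 + (-1) ^ 2 ≠ 0) := by
  refine ⟨?_, ?_, by norm_num, by norm_num, by intro h; exact hchar (by linear_combination h)⟩
  · ext i j
    fin_cases i <;> fin_cases j <;>
      simp [exA2, exB2, Matrix.mul_apply, Fin.sum_univ_succ] <;> ring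
  intro v hv
  constructor
  · -- generic case: rank = 2
    intro hex
    have rankB_eq : ∀ f : Fin 2 → Fin 6,
        ((((exB2 k).map (MvPolynomial.eval v)).transpose.submatrix f id).det ≠ 0) →
        ((exB2 k).map (MvPolynomial.eval v)).rank = 2 := by
      intro f hf
      rw [← Matrix.rank_transpose]
      exact aux_rank_eq_two_of_minor _ f hf
    by_cases h0 : v 0 ≠ 0
    · constructor
      · apply aux_rank_eq_two_of_minor _ ![3, 4]
        have hM : (((exA2 k).map (MvPolynomial.eval v)).submatrix ![3, 4] id)
            = !![(MvPolynomial.eval v) (X 0 ^ 2), (MvPolynomial.eval v) (X 1 ^ 2); (MvPolynomial.eval v) (0), (MvPolynomial.eval v) (X 0 ^ 2)] := by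
          ext i j; fin_cases i <;> fin_cases j <;> rfl
        have hd : (((exA2 k).map (MvPolynomial.eval v)).submatrix ![3, 4] id).det
            = v 0 ^ 2 * v 0 ^ 2 := by
          rw [hM, Matrix.det_fin_two]; simp <;> ring
        rw [hd]
        exact mul_ne_zero (pow_ne_zero _ h0) (pow_ne_zero _ h0)
      · apply rankB_eq ![0, 1]
        have hM : ((((exB2 k).map (MvPolynomial.eval v)).transpose.submatrix ![0, 1] id))
            = !![(MvPolynomial.eval v) (X 0 ^ 2), (MvPolynomial.eval v) (0); (MvPolynomial.eval v) (X 1 ^ 2), (MvPolynomial.eval v) (X 0 ^ 2)] := by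
          ext i j; fin_cases i <;> fin_cases j <;> rfl
        have hd : ((((exB2 k).map (MvPolynomial.eval v)).transpose.submatrix ![0, 1] id)).det
            = v 0 ^ 2 * v 0 ^ 2 := by
          rw [hM, Matrix.det_fin_two]; simp <;> ring
        rw [hd]
        exact mul_ne_zero (pow_ne_zero _ h0) (pow_ne_zero _ h0)
    push_neg at h0
    by_cases h2 : v 2 ≠ 0
    · constructor
      · apply aux_rank_eq_two_of_minor _ ![0, 1]
        have hM : (((exA2 k).map (MvPolynomial.eval v)).submatrix ![0, 1] id)
            = !![(MvPolynomial.eval v) (-X 2 ^ 2), (MvPolynomial.eval v) (-X 3 ^ 2); (MvPolynomial.eval v) (0), (MvPolynomial.eval v) (-X 2 ^ 2)] := by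
          ext i j; fin_cases i <;> fin_cases j <;> rfl
        have hd : (((exA2 k).map (MvPolynomial.eval v)).submatrix ![0, 1] id).det
            = v 2 ^ 2 * v 2 ^ 2 := by
          rw [hM, Matrix.det_fin_two]; simp <;> ring
        rw [hd]
        exact mul_ne_zero (pow_ne_zero _ h2) (pow_ne_zero _ h2)
      · apply rankB_eq ![3, 4]
        have hM : ((((exB2 k).map (MvPolynomial.eval v)).transpose.submatrix ![3, 4] id))
            = !![(MvPolynomial.eval v) (X 2 ^ 2), (MvPolynomial.eval v) (0); (MvPolynomial.eval v) (X 3 ^ 2), (MvPolynomial.eval v) (X 2 ^ 2)] := by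
          ext i j; fin_cases i <;> fin_cases j <;> rfl
        have hd : ((((exB2 k).map (MvPolynomial.eval v)).transpose.submatrix ![3, 4] id)).det
            = v 2 ^ 2 * v 2 ^ 2 := by
          rw [hM, Matrix.det_fin_two]; simp <;> ring
        rw [hd]
        exact mul_ne_zero (pow_ne_zero _ h2) (pow_ne_zero _ h2)
    push_neg at h2
    by_cases he : v 3 * v 4 ≠ 0
    · have h3 : v 3 ≠ 0 := fun h => he (by rw [h]; ring)
      constructor
      · apply aux_rank_eq_two_of_minor _ ![0, 2]
        have hM : (((exA2 k).map (MvPolynomial.eval v)).submatrix ![0, 2] id)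
            = !![(MvPolynomial.eval v) (-X 2 ^ 2), (MvPolynomial.eval v) (-X 3 ^ 2); (MvPolynomial.eval v) (-(X 3 * X 4)), (MvPolynomial.eval v) (0)] := by
          ext i j; fin_cases i <;> fin_cases j <;> rfl
        have hd : (((exA2 k).map (MvPolynomial.eval v)).submatrix ![0, 2] id).det
            = -(v 3 ^ 2 * (v 3 * v 4)) := by
          rw [hM, Matrix.det_fin_two]; simp <;> ring
        rw [hd]
        exact neg_ne_zero.2 (mul_ne_zero (pow_ne_zero _ h3) he)
      · apply rankB_eq ![4, 5]
        have hM : ((((exB2 k).map (MvPolynomial.eval v)).transpose.submatrix ![4, 5] id))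
            = !![(MvPolynomial.eval v) (X 3 ^ 2), (MvPolynomial.eval v) (X 2 ^ 2); (MvPolynomial.eval v) (0), (MvPolynomial.eval v) (X 3 * X 4)] := by
          ext i j; fin_cases i <;> fin_cases j <;> rfl
        have hd : ((((exB2 k).map (MvPolynomial.eval v)).transpose.submatrix ![4, 5] id)).det
            = v 3 ^ 2 * (v 3 * v 4) := by
          rw [hM, Matrix.det_fin_two]; simp <;> ring
        rw [hd]
        exact mul_ne_zero (pow_ne_zero _ h3) he
    push_neg at he
    by_cases hf : v 1 ^ 2 + v 1 * v 4 ≠ 0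
    · have h1 : v 1 ≠ 0 := fun h => hf (by rw [h]; ring)
      constructor
      · apply aux_rank_eq_two_of_minor _ ![3, 5]
        have hM : (((exA2 k).map (MvPolynomial.eval v)).submatrix ![3, 5] id)
            = !![(MvPolynomial.eval v) (X 0 ^ 2), (MvPolynomial.eval v) (X 1 ^ 2); (MvPolynomial.eval v) (X 1 ^ 2 + X 1 * X 4), (MvPolynomial.eval v) (0)] := by
          ext i j; fin_cases i <;> fin_cases j <;> rfl
        have hd : (((exA2 k).map (MvPolynomial.eval v)).submatrix ![3, 5] id).det
            = -(v 1 ^ 2 * (v 1 ^ 2 + v 1 * v 4)) := by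
          rw [hM, Matrix.det_fin_two]; simp <;> ring
        rw [hd]
        exact neg_ne_zero.2 (mul_ne_zero (pow_ne_zero _ h1) hf)
      · apply rankB_eq ![1, 2]
        have hM : ((((exB2 k).map (MvPolynomial.eval v)).transpose.submatrix ![1, 2] id))
            = !![(MvPolynomial.eval v) (X 1 ^ 2), (MvPolynomial.eval v) (X 0 ^ 2); (MvPolynomial.eval v) (0), (MvPolynomial.eval v) (X 1 ^ 2 + X 1 * X 4)] := by
          ext i j; fin_cases i <;> fin_cases j <;> rfl
        have hd : ((((exB2 k).map (MvPolynomial.eval v)).transpose.submatrix ![1, 2] id)).det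
            = v 1 ^ 2 * (v 1 ^ 2 + v 1 * v 4) := by
          rw [hM, Matrix.det_fin_two]; simp <;> ring
        rw [hd]
        exact mul_ne_zero (pow_ne_zero _ h1) hf
    push_neg at hf
    -- derive that v is exceptional, contradiction
    exfalso
    apply hex
    by_cases h3 : v 3 = 0
    · by_cases h1 : v 1 = 0
      · refine ⟨v 4, Or.inr (Or.inl ?_)⟩
        funext i
        fin_cases i <;> simp [h0, h1, h2, h3]
      · have h4 : v 4 = -v 1 := by
          have : v 1 * (v 1 + v 4) = 0 := by linear_combination hf
          rcases mul_eq_zero.1 this with h | h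
          · exact absurd h h1
          · linear_combination h
        refine ⟨v 1, Or.inr (Or.inr ?_)⟩
        funext i
        fin_cases i <;> simp [h0, h2, h3, h4] <;> ring
    · have h4 : v 4 = 0 := by
        rcases mul_eq_zero.1 he with h | h
        · exact absurd h h3
        · exact h
      have h1 : v 1 = 0 := by
        have : v 1 ^ 2 = 0 := by rw [h4] at hf; linear_combination hf
        exact pow_eq_zero_iff (n := 2) (by norm_num) |>.1 this
      refine ⟨v 3, Or.inl ?_⟩
      funext i
      fin_cases i <;> simp [h0, h1, h2, h4]
  · -- exceptional points: rank < 2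
    rintro ⟨t, h | h | h⟩ <;> subst h
    · have hw : (t • ![(0 : k), 0, 0, 1, 0]) = ![0, 0, 0, t, 0] := by
        funext i; fin_cases i <;> simp
      rw [hw]
      have hA : (exA2 k).map (MvPolynomial.eval ![(0 : k), 0, 0, t, 0])
          = !![0, -t ^ 2; 0, 0; 0, 0; 0, 0; 0, 0; 0, 0] := by
        ext i j
        fin_cases i <;> fin_cases j <;> simp [exA2, cv5, cv4, cv3, cv2, Matrix.vecHead, Matrix.vecTail]
      have hB : (exB2 k).map (MvPolynomial.eval ![(0 : k), 0, 0, t, 0])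
          = !![0, 0, 0, 0, t ^ 2, 0; 0, 0, 0, 0, 0, 0] := by
        ext i j
        fin_cases i <;> fin_cases j <;> simp [exB2, cv5, cv4, cv3, cv2, Matrix.vecHead, Matrix.vecTail]
      rw [hA, hB]
      constructor
      · refine lt_of_le_of_lt (aux_rank_le_one_factor _ !![(-t ^ 2 : k); 0; 0; 0; 0; 0] !![0, 1] ?_) one_lt_two
        ext i j
        fin_cases i <;> fin_cases j <;>
          simp [Matrix.mul_apply, Fin.sum_univ_succ, cv5, cv4, cv3, cv2, Matrix.vecHead, Matrix.vecTail]
      · refine lt_of_le_of_lt (aux_rank_le_one_factor _ !![(1 : k); 0] !![0, 0, 0, 0, t ^ 2, 0] ?_) one_lt_two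
        ext i j
        fin_cases i <;> fin_cases j <;>
          simp [Matrix.mul_apply, Fin.sum_univ_succ, cv5, cv4, cv3, cv2, Matrix.vecHead, Matrix.vecTail]
    · have hw : (t • ![(0 : k), 0, 0, 0, 1]) = ![0, 0, 0, 0, t] := by
        funext i; fin_cases i <;> simp
      rw [hw]
      have hA : (exA2 k).map (MvPolynomial.eval ![(0 : k), 0, 0, 0, t]) = 0 := by
        ext i j
        fin_cases i <;> fin_cases j <;> simp [exA2, cv5, cv4, cv3, cv2, Matrix.vecHead, Matrix.vecTail]
      have hB : (exB2 k).map (MvPolynomial.eval ![(0 : k), 0, 0, 0, t]) = 0 := by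
        ext i j
        fin_cases i <;> fin_cases j <;> simp [exB2, cv5, cv4, cv3, cv2, Matrix.vecHead, Matrix.vecTail]
      rw [hA, hB, Matrix.rank_zero]
      norm_num
    · have hw : (t • ![(0 : k), 1, 0, 0, -1]) = ![0, t, 0, 0, -t] := by
        funext i; fin_cases i <;> simp
      rw [hw]
      have hA : (exA2 k).map (MvPolynomial.eval ![(0 : k), t, 0, 0, -t])
          = !![0, 0; 0, 0; 0, 0; 0, t ^ 2; 0, 0; 0, 0] := by
        ext i j
        fin_cases i <;> fin_cases j <;> simp [exA2, cv5, cv4, cv3, cv2, Matrix.vecHead, Matrix.vecTail] <;> ring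
      have hB : (exB2 k).map (MvPolynomial.eval ![(0 : k), t, 0, 0, -t])
          = !![0, t ^ 2, 0, 0, 0, 0; 0, 0, 0, 0, 0, 0] := by
        ext i j
        fin_cases i <;> fin_cases j <;> simp [exB2, cv5, cv4, cv3, cv2, Matrix.vecHead, Matrix.vecTail] <;> ring
      rw [hA, hB]
      constructor
      · refine lt_of_le_of_lt (aux_rank_le_one_factor _ !![(0 : k); 0; 0; 1; 0; 0] !![0, t ^ 2] ?_) one_lt_two
        ext i j
        fin_cases i <;> fin_cases j <;>
          simp [Matrix.mul_apply, Fin.sum_univ_succ, cv5, cv4, cv3, cv2, Matrix.vecHead, Matrix.vecTail]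
      · refine lt_of_le_of_lt (aux_rank_le_one_factor _ !![(1 : k); 0] !![0, t ^ 2, 0, 0, 0, 0] ?_) one_lt_two
        ext i j
        fin_cases i <;> fin_cases j <;>
          simp [Matrix.mul_apply, Fin.sum_univ_succ, cv5, cv4, cv3, cv2, Matrix.vecHead, Matrix.vecTail]
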